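/- arXiv:2206.02586 — 4 statements merged into one kernel-verified Lean document; each statement's English description precedes it below -/
import Mathlib

section
/- Let U₁ ⊆ ℝᵐ and U₂ ⊆ ℝⁿ be nonempty open sets. For every ℝ-algebra homomorphism Φ : C^∞(U₂) → C^∞(U₁) there exists a unique smooth map φ : U₁ → U₂ such that Φ(f) = f ∘ φ for all f ∈ C^∞(U₂). Moreover the components of φ are given by the images of the coordinate functions: φᵘ = Φ(xᵘ) for μ = 1, …, n, where xᵘ ∈ C^∞(U₂) is the μ-th coordinate function. -/
open scoped Manifold
open TopologicalSpace

/-- The `μ`-th coordinate function on an open subset `U` of `ℝⁿ`, as a smooth function. -/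
def Opens.coordFn (n : ℕ) (U : Opens (EuclideanSpace ℝ (Fin n))) (μ : Fin n) :
    C^(⊤ : ℕ∞)⟮𝓡 n, U; 𝓘(ℝ, ℝ), ℝ⟯ :=
  ⟨fun x => (x : EuclideanSpace ℝ (Fin n)) μ,
    ((EuclideanSpace.proj (𝕜 := ℝ) μ).contMDiff.comp contMDiff_subtype_val : ContMDiff _ _ _
      ((EuclideanSpace.proj (𝕜 := ℝ) μ) ∘ (Subtype.val : U → EuclideanSpace ℝ (Fin n))))⟩

noncomputable section Aux

/-- Codomain restriction of a smooth map to an open set containing its range. -/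
lemma contMDiff_codRestrict_aux {m n : ℕ} {U : Opens (EuclideanSpace ℝ (Fin n))}
    {M : Type*} [TopologicalSpace M] [ChartedSpace (EuclideanSpace ℝ (Fin m)) M]
    {f : M → EuclideanSpace ℝ (Fin n)} (hf : ContMDiff (𝓡 m) (𝓡 n) (⊤ : ℕ∞) f)
    (h : ∀ x, f x ∈ U) : ContMDiff (𝓡 m) (𝓡 n) (⊤ : ℕ∞) (fun x => (⟨f x, h x⟩ : U)) := by
  intro x
  rw [contMDiffAt_iff_target]
  constructor
  · exact (hf.continuous.codRestrict h).continuousAt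
  · have : (extChartAt (𝓡 n) (⟨f x, h x⟩ : U)) ∘ (fun x => (⟨f x, h x⟩ : U)) = f := by
      funext y
      show (chartAt (EuclideanSpace ℝ (Fin n)) ((⟨f x, h x⟩ : U))) (⟨f y, h y⟩ : U) = f y
      rw [show chartAt (EuclideanSpace ℝ (Fin n)) ((⟨f x, h x⟩ : U))
          = (chartAt (EuclideanSpace ℝ (Fin n)) (f x)).subtypeRestr ⟨⟨f x, h x⟩⟩ from rfl]
      simp [OpenPartialHomeomorph.subtypeRestr_coe, chartAt_self_eq]
    rw [this]
    exact hf.contMDiffAt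

/-- Evaluation at a point as an `ℝ`-algebra homomorphism. -/
def Opens.evalAlgHom {n : ℕ} (U : Opens (EuclideanSpace ℝ (Fin n))) (z : U) :
    C^(⊤ : ℕ∞)⟮𝓡 n, U; 𝓘(ℝ, ℝ), ℝ⟯ →ₐ[ℝ] ℝ :=
  { ContMDiffMap.evalRingHom z with commutes' := fun _ => rfl }

@[simp] lemma Opens.evalAlgHom_apply {n : ℕ} (U : Opens (EuclideanSpace ℝ (Fin n))) (z : U)
    (f : C^(⊤ : ℕ∞)⟮𝓡 n, U; 𝓘(ℝ, ℝ), ℝ⟯) : Opens.evalAlgHom U z f = f z := rfl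

/-- If a character kills `g`, then `g` has a zero (otherwise `g` would be invertible). -/
lemma char_exists_zero {n : ℕ} {U : Opens (EuclideanSpace ℝ (Fin n))}
    (χ : C^(⊤ : ℕ∞)⟮𝓡 n, U; 𝓘(ℝ, ℝ), ℝ⟯ →ₐ[ℝ] ℝ)
    (g : C^(⊤ : ℕ∞)⟮𝓡 n, U; 𝓘(ℝ, ℝ), ℝ⟯) (hg : χ g = 0) : ∃ y : U, g y = 0 := by
  by_contra hc
  push_neg at hc
  let ginv : C^(⊤ : ℕ∞)⟮𝓡 n, U; 𝓘(ℝ, ℝ), ℝ⟯ := ⟨fun y => (g y)⁻¹, g.contMDiff.inv₀ hc⟩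
  have h1 : g * ginv = 1 := by
    ext y
    exact mul_inv_cancel₀ (hc y)
  have h2 := congrArg χ h1
  rw [map_mul, hg, zero_mul, map_one] at h2
  exact zero_ne_one h2

/-- Every `ℝ`-algebra character on `C^∞(U)` is evaluation at a point of `U`. -/
lemma char_eval {n : ℕ} {U : Opens (EuclideanSpace ℝ (Fin n))}
    (χ : C^(⊤ : ℕ∞)⟮𝓡 n, U; 𝓘(ℝ, ℝ), ℝ⟯ →ₐ[ℝ] ℝ) :
    ∃ y : U, ∀ f : C^(⊤ : ℕ∞)⟮𝓡 n, U; 𝓘(ℝ, ℝ), ℝ⟯, χ f = f y := by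
  classical
  set p : EuclideanSpace ℝ (Fin n) :=
    (EuclideanSpace.equiv (Fin n) ℝ).symm (fun μ => χ (Opens.coordFn n U μ)) with hp
  have hpμ : ∀ μ, p μ = χ (Opens.coordFn n U μ) := fun _ => rfl
  set g₀ : C^(⊤ : ℕ∞)⟮𝓡 n, U; 𝓘(ℝ, ℝ), ℝ⟯ :=
    ∑ μ : Fin n, (Opens.coordFn n U μ - algebraMap ℝ _ (p μ)) ^ 2 with hg₀
  have key : ∀ ψ : C^(⊤ : ℕ∞)⟮𝓡 n, U; 𝓘(ℝ, ℝ), ℝ⟯ →ₐ[ℝ] ℝ,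
      ψ g₀ = ∑ μ : Fin n, (ψ (Opens.coordFn n U μ) - p μ) ^ 2 := by
    intro ψ
    rw [hg₀, map_sum]
    exact Finset.sum_congr rfl fun μ _ => by rw [map_pow, map_sub, AlgHom.commutes]; norm_num
  have hχg₀ : χ g₀ = 0 := by
    rw [key χ]
    simp [hpμ]
  obtain ⟨y, hy⟩ := char_exists_zero χ g₀ hχg₀
  have hevaly : ∀ z : U, g₀ z = ∑ μ : Fin n, ((z : EuclideanSpace ℝ (Fin n)) μ - p μ) ^ 2 :=
    fun z => key (Opens.evalAlgHom U z)
  have hcoord : ∀ z : U, g₀ z = 0 → (z : EuclideanSpace ℝ (Fin n)) = p := by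
    intro z hz
    rw [hevaly z] at hz
    ext μ
    have h0 := (Finset.sum_eq_zero_iff_of_nonneg
      (fun μ _ => sq_nonneg (((z : EuclideanSpace ℝ (Fin n)) μ - p μ)))).1 hz μ (Finset.mem_univ μ)
    have := pow_eq_zero_iff (n := 2) (by norm_num) |>.1 h0
    linarith [this]
  have hyp : (y : EuclideanSpace ℝ (Fin n)) = p := hcoord y hy
  refine ⟨y, fun f => ?_⟩
  set gf : C^(⊤ : ℕ∞)⟮𝓡 n, U; 𝓘(ℝ, ℝ), ℝ⟯ := (f - algebraMap ℝ _ (χ f)) ^ 2 + g₀ with hgf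
  have hχgf : χ gf = 0 := by
    rw [hgf, map_add, map_pow, map_sub, AlgHom.commutes, hχg₀]
    norm_num
  obtain ⟨z, hz⟩ := char_exists_zero χ gf hχgf
  have hz' : (f z - χ f) ^ 2 + g₀ z = 0 := hz
  have h1 : (f z - χ f) ^ 2 = 0 ∧ g₀ z = 0 := by
    constructor <;> nlinarith [sq_nonneg (f z - χ f), hevaly z,
      Finset.sum_nonneg (fun μ (_ : μ ∈ Finset.univ) =>
        sq_nonneg (((z : EuclideanSpace ℝ (Fin n)) μ - p μ)))]
  have hzy : z = y := Subtype.ext (by rw [hcoord z h1.2, hyp])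
  have h2 := pow_eq_zero_iff (n := 2) (by norm_num) |>.1 h1.1
  have h3 : f z = χ f := by linarith
  rw [← hzy]
  exact h3.symm

end Aux

/-- Let `U₁ ⊆ ℝᵐ`, `U₂ ⊆ ℝⁿ` be nonempty open sets. Every `ℝ`-algebra
homomorphism `Φ : C^∞(U₂) → C^∞(U₁)` is the pullback along a unique smooth map `φ : U₁ → U₂`;
moreover the components of `φ` are the images under `Φ` of the coordinate functions. -/
theorem algHom_smoothFunctions_eq_pullback (m n : ℕ)
    (U₁ : Opens (EuclideanSpace ℝ (Fin m))) (U₂ : Opens (EuclideanSpace ℝ (Fin n)))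
    (h₁ : (U₁ : Set (EuclideanSpace ℝ (Fin m))).Nonempty)
    (h₂ : (U₂ : Set (EuclideanSpace ℝ (Fin n))).Nonempty)
    (Φ : C^(⊤ : ℕ∞)⟮𝓡 n, U₂; 𝓘(ℝ, ℝ), ℝ⟯ →ₐ[ℝ] C^(⊤ : ℕ∞)⟮𝓡 m, U₁; 𝓘(ℝ, ℝ), ℝ⟯) :
    (∃! φ : U₁ → U₂, ContMDiff (𝓡 m) (𝓡 n) (⊤ : ℕ∞) φ ∧
        ∀ f : C^(⊤ : ℕ∞)⟮𝓡 n, U₂; 𝓘(ℝ, ℝ), ℝ⟯, ⇑(Φ f) = ⇑f ∘ φ) ∧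
      ∀ φ : U₁ → U₂, (∀ f : C^(⊤ : ℕ∞)⟮𝓡 n, U₂; 𝓘(ℝ, ℝ), ℝ⟯, ⇑(Φ f) = ⇑f ∘ φ) →
        ∀ (μ : Fin n) (x : U₁),
          ((φ x : EuclideanSpace ℝ (Fin n)) μ) = Φ (Opens.coordFn n U₂ μ) x := by
  classical
  have hchar : ∀ x : U₁, ∃ y : U₂, ∀ f : C^(⊤ : ℕ∞)⟮𝓡 n, U₂; 𝓘(ℝ, ℝ), ℝ⟯, Φ f x = f y :=
    fun x => char_eval ((Opens.evalAlgHom U₁ x).comp Φ)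
  choose φ₀ hφ₀ using hchar
  have hpull : ∀ f : C^(⊤ : ℕ∞)⟮𝓡 n, U₂; 𝓘(ℝ, ℝ), ℝ⟯, ⇑(Φ f) = ⇑f ∘ φ₀ :=
    fun f => funext fun x => hφ₀ x f
  have hcoords : ∀ φ : U₁ → U₂, (∀ f : C^(⊤ : ℕ∞)⟮𝓡 n, U₂; 𝓘(ℝ, ℝ), ℝ⟯, ⇑(Φ f) = ⇑f ∘ φ) →
      ∀ (μ : Fin n) (x : U₁),
        ((φ x : EuclideanSpace ℝ (Fin n)) μ) = Φ (Opens.coordFn n U₂ μ) x := by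
    intro φ hφ μ x
    exact (congrFun (hφ (Opens.coordFn n U₂ μ)) x).symm
  have hval : ContMDiff (𝓡 m) (𝓡 n) (⊤ : ℕ∞)
      (fun x : U₁ => (φ₀ x : EuclideanSpace ℝ (Fin n))) := by
    have h1 : ContMDiff (𝓡 m) 𝓘(ℝ, Fin n → ℝ) (⊤ : ℕ∞)
        (fun x : U₁ => fun μ : Fin n => (Φ (Opens.coordFn n U₂ μ)) x) := by
      rw [contMDiff_pi_space]
      exact fun μ => (Φ (Opens.coordFn n U₂ μ)).contMDiff
    have h2 :=
      (((EuclideanSpace.equiv (Fin n) ℝ).symm : (Fin n → ℝ) →L[ℝ] EuclideanSpace ℝ (Fin n))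
        |>.contMDiff).comp h1
    have heq : (fun x : U₁ => (φ₀ x : EuclideanSpace ℝ (Fin n)))
        = (fun x : U₁ => (EuclideanSpace.equiv (Fin n) ℝ).symm
            (fun μ : Fin n => (Φ (Opens.coordFn n U₂ μ)) x)) := by
      funext x
      ext μ
      exact (hφ₀ x (Opens.coordFn n U₂ μ)).symm
    rw [heq]
    exact h2
  have hφsmooth : ContMDiff (𝓡 m) (𝓡 n) (⊤ : ℕ∞) φ₀ := by
    have h := contMDiff_codRestrict_aux hval (fun x => (φ₀ x).2)
    have heq : (fun x : U₁ => (⟨(φ₀ x : EuclideanSpace ℝ (Fin n)), (φ₀ x).2⟩ : U₂)) = φ₀ :=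
      funext fun x => Subtype.ext rfl
    rwa [heq] at h
  refine ⟨⟨φ₀, ⟨hφsmooth, hpull⟩, ?_⟩, hcoords⟩
  intro ψ hψ
  funext x
  apply Subtype.ext
  ext μ
  rw [hcoords ψ hψ.2 μ x, hcoords φ₀ hpull μ x]
end

section
/- Let U be an open subset of ℝⁿ, regarded as a smooth manifold, and let 𝒪 be the sheaf of commutative rings on U of ℝ-valued smooth functions (on each open V ⊆ U, 𝒪(V) = C^∞(V) with pointwise ring operations, with the usual restriction maps). Then every endomorphism F : 𝒪 → 𝒪 of sheaves of commutative rings (i.e., every family of unital ring homomorphisms F_V : C^∞(V) → C^∞(V) commuting with restrictions) is the identity. -/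
open scoped Manifold
open TopologicalSpace CategoryTheory
open Opposite
open scoped ContDiff

namespace SmoothSheafEndAux

variable {n : ℕ} {U : Opens (EuclideanSpace ℝ (Fin n))}

/-- constant section as a ring hom -/
noncomputable def constHom (V : Opens (TopCat.of U)) :
    ℝ →+* (smoothSheafCommRing (𝓡 n) 𝓘(ℝ, ℝ) U ℝ).val.obj (op V) where
  toFun r := (ContMDiffMap.const r : ContMDiffMap (𝓡 n) 𝓘(ℝ, ℝ) (V : Opens U) ℝ ∞)
  map_one' := rfl
  map_mul' _ _ := rfl
  map_zero' := rfl
  map_add' _ _ := rfl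

/-- evaluation at a point as a ring hom -/
noncomputable def evalHom (V : Opens (TopCat.of U)) (x : V) :
    (smoothSheafCommRing (𝓡 n) 𝓘(ℝ, ℝ) U ℝ).val.obj (op V) →+* ℝ where
  toFun g := (g : ContMDiffMap (𝓡 n) 𝓘(ℝ, ℝ) (V : Opens U) ℝ ∞) x
  map_one' := rfl
  map_mul' _ _ := rfl
  map_zero' := rfl
  map_add' _ _ := rfl

lemma unit_ne_zero {V : Opens (TopCat.of U)}
    {g : (smoothSheafCommRing (𝓡 n) 𝓘(ℝ, ℝ) U ℝ).val.obj (op V)}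
    (h : IsUnit g) (x : V) :
    (g : ContMDiffMap (𝓡 n) 𝓘(ℝ, ℝ) (V : Opens U) ℝ ∞) x ≠ 0 := by
  intro h0
  have h1 := map_one (evalHom V x)
  rw [← h.unit.val_inv, map_mul] at h1
  rw [show (evalHom V x) h.unit.val = 0 from h0] at h1
  simpa using h1

lemma isUnit_of_nonvanishing {V : Opens (TopCat.of U)}
    (g : (smoothSheafCommRing (𝓡 n) 𝓘(ℝ, ℝ) U ℝ).val.obj (op V))
    (h : ∀ x : V, (g : ContMDiffMap (𝓡 n) 𝓘(ℝ, ℝ) (V : Opens U) ℝ ∞) x ≠ 0) : IsUnit g := by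
  refine IsUnit.of_mul_eq_one (a := g)
    (⟨fun x => ((g : ContMDiffMap (𝓡 n) 𝓘(ℝ, ℝ) (V : Opens U) ℝ ∞) x)⁻¹,
      (ContMDiffMap.contMDiff (g : ContMDiffMap (𝓡 n) 𝓘(ℝ, ℝ) (V : Opens U) ℝ ∞)).inv₀ h⟩ :
      ContMDiffMap (𝓡 n) 𝓘(ℝ, ℝ) (V : Opens U) ℝ ∞) ?_
  apply ContMDiffMap.ext
  intro x
  exact mul_inv_cancel₀ (h x)

end SmoothSheafEndAux

namespace SmoothSheafEndAux
variable {n : ℕ} {U : Opens (EuclideanSpace ℝ (Fin n))}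

lemma map_apply {V W : Opens (TopCat.of U)} (h : W ≤ V)
    (g : (smoothSheafCommRing (𝓡 n) 𝓘(ℝ, ℝ) U ℝ).val.obj (op V)) (y : W) :
    ((smoothSheafCommRing (𝓡 n) 𝓘(ℝ, ℝ) U ℝ).val.map (homOfLE h).op g
      : ContMDiffMap (𝓡 n) 𝓘(ℝ, ℝ) (W : Opens U) ℝ ∞) y =
    (g : ContMDiffMap (𝓡 n) 𝓘(ℝ, ℝ) (V : Opens U) ℝ ∞) (Set.inclusion h y) := rfl

theorem key (F : smoothSheafCommRing (𝓡 n) 𝓘(ℝ, ℝ) U ℝ ⟶ smoothSheafCommRing (𝓡 n) 𝓘(ℝ, ℝ) U ℝ)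
    (V : Opens (TopCat.of U))
    (f : (smoothSheafCommRing (𝓡 n) 𝓘(ℝ, ℝ) U ℝ).val.obj (op V)) (x : V) :
    ((F.hom.app (op V) f : ContMDiffMap (𝓡 n) 𝓘(ℝ, ℝ) (V : Opens U) ℝ ∞)) x =
      (f : ContMDiffMap (𝓡 n) 𝓘(ℝ, ℝ) (V : Opens U) ℝ ∞) x := by
  -- F fixes constants
  have hconst : ∀ (W : Opens (TopCat.of U)) (y : W) (r : ℝ),
      evalHom W y (F.hom.app (op W) (constHom W r)) = r := by
    intro W y r
    have : ((evalHom W y).comp ((F.hom.app (op W)).hom.comp (constHom W))) =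
        RingHom.id ℝ := Subsingleton.elim _ _
    exact congrArg (fun φ => φ r) this
  by_contra hne
  set c : ℝ := (F.hom.app (op V) f : ContMDiffMap (𝓡 n) 𝓘(ℝ, ℝ) (V : Opens U) ℝ ∞) x with hc
  -- the section g = f - c
  set g := f - constHom V c with hg
  have hgx : (g : ContMDiffMap (𝓡 n) 𝓘(ℝ, ℝ) (V : Opens U) ℝ ∞) x ≠ 0 := by
    have : evalHom V x g = evalHom V x f - c := by rw [hg, map_sub]; rfl
    exact fun h0 => sub_ne_zero_of_ne (Ne.symm hne) (this.symm.trans h0)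
  -- the open set where g does not vanish
  set t : Set V := (⇑(g : ContMDiffMap (𝓡 n) 𝓘(ℝ, ℝ) (V : Opens U) ℝ ∞)) ⁻¹' {0}ᶜ with ht
  have ht_open : IsOpen t :=
    (ContMDiffMap.contMDiff (g : ContMDiffMap (𝓡 n) 𝓘(ℝ, ℝ) (V : Opens U) ℝ ∞)).continuous.isOpen_preimage _ isOpen_compl_singleton
  set W : Opens (TopCat.of U) := ⟨Subtype.val '' t, V.isOpen.isOpenMap_subtype_val t ht_open⟩
    with hW
  have hWV : W ≤ V := by rintro y ⟨z, _, rfl⟩; exact z.2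
  set gW := (smoothSheafCommRing (𝓡 n) 𝓘(ℝ, ℝ) U ℝ).val.map (homOfLE hWV).op g with hgWdef
  have hgW : ∀ y : W, (gW : ContMDiffMap (𝓡 n) 𝓘(ℝ, ℝ) (W : Opens U) ℝ ∞) y ≠ 0 := by
    intro y
    rw [hgWdef, map_apply hWV]
    obtain ⟨z, hz, hzy⟩ := y.2
    have : Set.inclusion hWV y = z := Subtype.ext hzy.symm
    rw [this]
    exact hz
  have hu : IsUnit (F.hom.app (op W) gW) :=
    (isUnit_of_nonvanishing gW hgW).map (F.hom.app (op W)).hom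
  -- x lies in W
  have hxW : x.1 ∈ W := ⟨x, hgx, rfl⟩
  have h0 := unit_ne_zero hu ⟨x.1, hxW⟩
  apply h0
  -- naturality
  have hnat' : F.hom.app (op W) gW =
      (smoothSheafCommRing (𝓡 n) 𝓘(ℝ, ℝ) U ℝ).val.map (homOfLE hWV).op (F.hom.app (op V) g) := by
    rw [hgWdef, ← CategoryTheory.comp_apply, F.hom.naturality (homOfLE hWV).op,
      CategoryTheory.comp_apply]
  rw [hnat', map_apply hWV]
  have hincl : Set.inclusion hWV (⟨x.1, hxW⟩ : W) = x := Subtype.ext rfl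
  rw [hincl]
  have : F.hom.app (op V) g = F.hom.app (op V) f - F.hom.app (op V) (constHom V c) := by
    rw [hg]; exact map_sub (F.hom.app (op V)).hom _ _
  have hval : evalHom V x (F.hom.app (op V) g) = 0 := by
    rw [this, map_sub]
    have h1 : evalHom V x (F.hom.app (op V) f) = c := hc.symm
    have h2 : evalHom V x (F.hom.app (op V) (constHom V c)) = c := hconst V x c
    rw [h1, h2, sub_self]
  exact hval

end SmoothSheafEndAux

/-- Let `U` be an open subset of `ℝⁿ`, regarded as a smooth manifold, and let
`𝒪` be its sheaf of commutative rings of smooth real-valued functions. Every endomorphism of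
`𝒪` as a sheaf of commutative rings is the identity. -/
theorem smoothSheaf_endomorphism_eq_id (n : ℕ) (U : Opens (EuclideanSpace ℝ (Fin n)))
    (F : smoothSheafCommRing (𝓡 n) 𝓘(ℝ, ℝ) U ℝ ⟶ smoothSheafCommRing (𝓡 n) 𝓘(ℝ, ℝ) U ℝ) :
    F = 𝟙 (smoothSheafCommRing (𝓡 n) 𝓘(ℝ, ℝ) U ℝ) := by
  apply Sheaf.hom_ext
  apply NatTrans.ext
  funext V
  ext f
  apply ContMDiffMap.ext
  intro x
  exact (SmoothSheafEndAux.key F V.unop f x).trans rfl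
end

section
/- Let R be a commutative ring equipped with the discrete topology, σ a finite type, and give MvPowerSeries σ R the product topology (of coefficientwise convergence). Let A be a commutative R-algebra, J an ideal of A such that A is J-adically complete and separated, and give A the J-adic topology. Then for every family v : σ → A with v i ∈ J for all i, there exists a unique continuous R-algebra homomorphism Φ : MvPowerSeries σ R → A such that Φ(X i) = v i for all i ∈ σ. -/
set_option linter.unusedSectionVars false
set_option linter.unusedVariables false

noncomputable section PSAux

open Finsupp MvPowerSeries

namespace PSAux

variable {R : Type*} [CommRing R] {σ : Type*} [Finite σ]
  {A : Type*} [CommRing A] [Algebra R A]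

/-- The finset of exponents of degree `< n`. -/
def S (σ : Type*) [Finite σ] (n : ℕ) : Finset (σ →₀ ℕ) :=
  ((Finsupp.finite_of_degree_le (σ := σ) n).toFinset).filter fun m => m.degree < n

lemma mem_S {n : ℕ} {m : σ →₀ ℕ} : m ∈ S σ n ↔ m.degree < n := by
  classical
  simp only [S, Finset.mem_filter, Set.Finite.mem_toFinset, Set.mem_setOf_eq,
    and_iff_right_iff_imp]
  exact fun h => h.le

lemma degree_add (a b : σ →₀ ℕ) : (a + b).degree = a.degree + b.degree := by
  classical
  exact map_add Finsupp.degree a b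

lemma degree_single (i : σ) (k : ℕ) : (Finsupp.single i k).degree = k := by
  classical
  rcases eq_or_ne k 0 with rfl | hk
  · simp [Finsupp.degree]
  · exact Finsupp.degree_single i k

variable (v : σ → A)

/-- `v ^ m` as a product. -/
def vp (m : σ →₀ ℕ) : A := m.prod fun i k => v i ^ k

@[simp] lemma vp_zero : vp v 0 = 1 := by simp [vp]

lemma vp_add (a b : σ →₀ ℕ) : vp v (a + b) = vp v a * vp v b := by
  classical
  exact Finsupp.prod_add_index (fun i _ => pow_zero (v i)) (fun i _ x y => pow_add (v i) x y)

lemma vp_single (i : σ) : vp v (Finsupp.single i 1) = v i := by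
  simp [vp, Finsupp.prod_single_index (pow_zero (v i))]

lemma prod_pow_mem (J : Ideal A) (hv : ∀ i, v i ∈ J) (m : σ →₀ ℕ) (s : Finset σ) :
    ∏ i ∈ s, v i ^ m i ∈ J ^ (∑ i ∈ s, m i) := by
  classical
  induction s using Finset.induction with
  | empty => simp [Ideal.one_eq_top]
  | insert a s hx ih =>
    rw [Finset.prod_insert hx, Finset.sum_insert hx, pow_add]
    exact Ideal.mul_mem_mul (Ideal.pow_mem_pow (hv a) _) ih

lemma vp_mem (J : Ideal A) (hv : ∀ i, v i ∈ J) (m : σ →₀ ℕ) :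
    vp v m ∈ J ^ m.degree :=
  prod_pow_mem v J hv m m.support

variable (R)

/-- Partial evaluation: sum of the monomials of degree `< n`. -/
def g (f : MvPowerSeries σ R) (n : ℕ) : A :=
  ∑ m ∈ S σ n, algebraMap R A (MvPowerSeries.coeff m f) * vp v m

variable {R}

lemma g_congr {f f' : MvPowerSeries σ R} {n : ℕ}
    (h : ∀ m ∈ S σ n, MvPowerSeries.coeff m f = MvPowerSeries.coeff m f') :
    g R v f n = g R v f' n :=
  Finset.sum_congr rfl fun m hm => by rw [h m hm]

lemma g_add (f f' : MvPowerSeries σ R) (n : ℕ) :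
    g R v (f + f') n = g R v f n + g R v f' n := by
  simp [g, map_add, add_mul, Finset.sum_add_distrib]

lemma g_zero (n : ℕ) : g R v (0 : MvPowerSeries σ R) n = 0 := by simp [g]

lemma g_tail (J : Ideal A) (hv : ∀ i, v i ∈ J) (f : MvPowerSeries σ R) {k n : ℕ} (h : k ≤ n) :
    g R v f n - g R v f k ∈ J ^ k := by
  classical
  have hsub : S σ k ⊆ S σ n := fun m hm => mem_S.mpr (lt_of_lt_of_le (mem_S.mp hm) h)
  have hsplit : g R v f n
      = (∑ m ∈ S σ n \ S σ k, algebraMap R A (MvPowerSeries.coeff m f) * vp v m)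
        + g R v f k := by
    rw [g, g, Finset.sum_sdiff hsub]
  rw [hsplit, add_sub_cancel_right]
  refine Ideal.sum_mem _ fun m hm => Ideal.mul_mem_left _ _ ?_
  rcases Finset.mem_sdiff.mp hm with ⟨_, hmk⟩
  have : k ≤ m.degree := le_of_not_gt (fun hc => hmk (mem_S.mpr hc))
  exact Ideal.pow_le_pow_right this (vp_mem v J hv m)

lemma g_one (J : Ideal A) {n : ℕ} (h : 1 ≤ n) : g R v (1 : MvPowerSeries σ R) n = 1 := by
  classical
  rw [g, Finset.sum_eq_single (0 : σ →₀ ℕ)]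
  · simp [MvPowerSeries.coeff_one]
  · intro m _ hm
    simp [MvPowerSeries.coeff_one, hm]
  · intro h0
    exact absurd (mem_S.mpr (by simp; omega)) h0

lemma g_C (J : Ideal A) (r : R) {n : ℕ} (h : 1 ≤ n) :
    g R v (MvPowerSeries.C r) n = algebraMap R A r := by
  classical
  rw [g, Finset.sum_eq_single (0 : σ →₀ ℕ)]
  · simp [MvPowerSeries.coeff_C]
  · intro m _ hm
    simp [MvPowerSeries.coeff_C, hm]
  · intro h0
    exact absurd (mem_S.mpr (by simp; omega)) h0

lemma g_X (i : σ) {n : ℕ} (h : 2 ≤ n) : g R v (MvPowerSeries.X i) n = v i := by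
  classical
  rw [g, Finset.sum_eq_single (Finsupp.single i 1)]
  · simp [MvPowerSeries.coeff_X, vp_single]
  · intro m _ hm
    simp [MvPowerSeries.coeff_X, hm]
  · intro h0
    exact absurd (mem_S.mpr (by rw [degree_single]; omega)) h0

lemma g_mul (J : Ideal A) (hv : ∀ i, v i ∈ J) (f f' : MvPowerSeries σ R) (n : ℕ) :
    g R v (f * f') n - g R v f n * g R v f' n ∈ J ^ n := by
  classical
  set F : (σ →₀ ℕ) × (σ →₀ ℕ) → A := fun p =>
    algebraMap R A (MvPowerSeries.coeff p.1 f) *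
      algebraMap R A (MvPowerSeries.coeff p.2 f') * vp v (p.1 + p.2) with hF
  have hmul : g R v f n * g R v f' n = ∑ p ∈ S σ n ×ˢ S σ n, F p := by
    rw [g, g, Finset.sum_mul_sum, Finset.sum_product]
    refine Finset.sum_congr rfl fun m1 _ => Finset.sum_congr rfl fun m2 _ => ?_
    simp only [hF, vp_add]; ring
  have hprod : g R v (f * f') n
      = ∑ p ∈ (S σ n ×ˢ S σ n).filter (fun p => (p.1 + p.2).degree < n), F p := by
    rw [g]
    have : ∀ m ∈ S σ n,
        algebraMap R A (MvPowerSeries.coeff m (f * f')) * vp v m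
          = ∑ p ∈ Finset.HasAntidiagonal.antidiagonal m, F p := by
      intro m hm
      rw [MvPowerSeries.coeff_mul, map_sum, Finset.sum_mul]
      refine Finset.sum_congr rfl fun p hp => ?_
      have hpm : p.1 + p.2 = m := Finset.HasAntidiagonal.mem_antidiagonal.mp hp
      simp only [hF, hpm, map_mul]
    rw [Finset.sum_congr rfl this, Finset.sum_sigma']
    refine Finset.sum_nbij' (fun x => x.2) (fun p => ⟨p.1 + p.2, p⟩) ?_ ?_ ?_ ?_ ?_
    · rintro ⟨m, p⟩ hx
      rcases Finset.mem_sigma.mp hx with ⟨hm, hp⟩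
      have hpm : p.1 + p.2 = m := Finset.HasAntidiagonal.mem_antidiagonal.mp hp
      have hdm : m.degree < n := mem_S.mp hm
      have hda : p.1.degree + p.2.degree = m.degree := by rw [← degree_add, hpm]
      dsimp only
      refine Finset.mem_filter.mpr ⟨Finset.mem_product.mpr ⟨?_, ?_⟩, by rw [hpm]; exact hdm⟩
      · exact mem_S.mpr (by omega)
      · exact mem_S.mpr (by omega)
    · intro p hp
      rcases Finset.mem_filter.mp hp with ⟨_, hd⟩
      exact Finset.mem_sigma.mpr ⟨mem_S.mpr hd, Finset.HasAntidiagonal.mem_antidiagonal.mpr rfl⟩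
    · rintro ⟨m, p⟩ hx
      rcases Finset.mem_sigma.mp hx with ⟨_, hp⟩
      have hpm : p.1 + p.2 = m := Finset.HasAntidiagonal.mem_antidiagonal.mp hp
      simp [hpm]
    · intro p _; rfl
    · intro x _; rfl
  rw [hprod, hmul, ← Finset.sum_filter_add_sum_filter_not (S σ n ×ˢ S σ n)
    (fun p => (p.1 + p.2).degree < n) F]
  simp only [sub_add_cancel_left, add_sub_cancel_left]
  refine neg_mem (Ideal.sum_mem _ fun p hp => Ideal.mul_mem_left _ _ ?_)
  rcases Finset.mem_filter.mp hp with ⟨_, hd⟩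
  exact Ideal.pow_le_pow_right (le_of_not_gt hd) (vp_mem v J hv _)

section Limit

variable (J : Ideal A) [IsAdicComplete J A]

lemma smod_iff (I : Ideal A) (x y : A) :
    x ≡ y [SMOD (I • ⊤ : Ideal A)] ↔ x - y ∈ I := by
  rw [SModEq.sub_mem, smul_eq_mul, Ideal.mul_top]

lemma eq_of_forall {x y : A} (h : ∀ n, x - y ∈ J ^ n) : x = y := by
  have := IsHausdorff.haus (IsAdicComplete.toIsHausdorff (I := J) (M := A)) (x - y)
    (fun n => by rw [smod_iff, sub_zero]; exact h n)
  exact sub_eq_zero.mp this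

variable (hv : ∀ i, v i ∈ J)

include hv in
lemma g_cauchy (f : MvPowerSeries σ R) : ∀ {m n : ℕ}, m ≤ n →
    g R v f m ≡ g R v f n [SMOD (J ^ m • ⊤ : Ideal A)] := by
  intro m n h
  rw [smod_iff]
  have := g_tail v J hv f h
  rw [show g R v f m - g R v f n = -(g R v f n - g R v f m) from by ring]
  exact neg_mem this

/-- The limit of the partial evaluations. -/
def plim (f : MvPowerSeries σ R) : A :=
  ((IsAdicComplete.toIsPrecomplete (I := J) (M := A)).prec (g_cauchy v J hv f)).choose

lemma plim_spec (f : MvPowerSeries σ R) (n : ℕ) :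
    plim v J hv f - g R v f n ∈ J ^ n := by
  have := ((IsAdicComplete.toIsPrecomplete (I := J) (M := A)).prec
    (g_cauchy v J hv f)).choose_spec n
  rw [smod_iff] at this
  rw [show plim v J hv f - g R v f n = -(g R v f n - plim v J hv f) from by ring]
  exact neg_mem this

lemma plim_add (f f' : MvPowerSeries σ R) :
    plim v J hv (f + f') = plim v J hv f + plim v J hv f' := by
  refine eq_of_forall J fun n => ?_
  have h1 := plim_spec v J hv f n
  have h2 := plim_spec v J hv f' n
  have h3 := plim_spec v J hv (f + f') n
  rw [g_add] at h3
  rw [show plim v J hv (f + f') - (plim v J hv f + plim v J hv f')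
      = (plim v J hv (f + f') - (g R v f n + g R v f' n))
        - (plim v J hv f - g R v f n) - (plim v J hv f' - g R v f' n) from by ring]
  exact sub_mem (sub_mem h3 h1) h2

lemma plim_zero : plim v J hv (0 : MvPowerSeries σ R) = 0 := by
  refine eq_of_forall J fun n => ?_
  have h := plim_spec v J hv (0 : MvPowerSeries σ R) n
  rwa [g_zero, sub_zero, ← sub_zero (plim v J hv 0)] at h

lemma plim_mul (f f' : MvPowerSeries σ R) :
    plim v J hv (f * f') = plim v J hv f * plim v J hv f' := by
  refine eq_of_forall J fun n => ?_
  have h1 := plim_spec v J hv f n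
  have h2 := plim_spec v J hv f' n
  have h3 := plim_spec v J hv (f * f') n
  have h4 := g_mul v J hv f f' n
  rw [show plim v J hv (f * f') - plim v J hv f * plim v J hv f'
      = (plim v J hv (f * f') - g R v (f * f') n)
        + (g R v (f * f') n - g R v f n * g R v f' n)
        + (-(g R v f n * (plim v J hv f' - g R v f' n)))
        + (-((plim v J hv f - g R v f n) * plim v J hv f')) from by ring]
  exact add_mem (add_mem (add_mem h3 h4) (neg_mem (Ideal.mul_mem_left _ _ h2)))
    (neg_mem (Ideal.mul_mem_right _ _ h1))

lemma plim_one : plim v J hv (1 : MvPowerSeries σ R) = 1 := by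
  refine eq_of_forall J fun n => ?_
  have h := plim_spec v J hv (1 : MvPowerSeries σ R) (n + 1)
  rw [g_one v J (Nat.le_add_left 1 n)] at h
  exact Ideal.pow_le_pow_right (Nat.le_succ n) h

lemma plim_C (r : R) : plim v J hv (MvPowerSeries.C r) = algebraMap R A r := by
  refine eq_of_forall J fun n => ?_
  have h := plim_spec v J hv (MvPowerSeries.C r) (n + 1)
  rw [g_C v J r (Nat.le_add_left 1 n)] at h
  exact Ideal.pow_le_pow_right (Nat.le_succ n) h

lemma plim_X (i : σ) : plim v J hv (MvPowerSeries.X i : MvPowerSeries σ R) = v i := by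
  refine eq_of_forall J fun n => ?_
  have h := plim_spec v J hv (MvPowerSeries.X i : MvPowerSeries σ R) (n + 2)
  rw [g_X v i (by omega)] at h
  exact Ideal.pow_le_pow_right (by omega) h

/-- The substitution algebra homomorphism. -/
def substHom : MvPowerSeries σ R →ₐ[R] A where
  toFun := plim v J hv
  map_one' := plim_one v J hv
  map_mul' := plim_mul v J hv
  map_zero' := plim_zero v J hv
  map_add' := plim_add v J hv
  commutes' := fun r => by
    rw [show algebraMap R (MvPowerSeries σ R) r = MvPowerSeries.C r from by
      rw [MvPowerSeries.algebraMap_apply]; simp]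
    exact plim_C v J hv r

@[simp] lemma substHom_apply (f : MvPowerSeries σ R) :
    substHom v J hv f = plim v J hv f := rfl

end Limit

end PSAux

end PSAux


open PSAux



/-- Let `R` be a commutative (discrete) ring, `σ` a finite type, and equip
`MvPowerSeries σ R` with the product topology of coefficientwise convergence (each coefficient
in the discrete topology). Let `A` be a commutative `R`-algebra, `J` an ideal of `A` such that
`A` is `J`-adically complete and separated, with `A` carrying the `J`-adic topology. Then for
every family `v : σ → A` with `v i ∈ J` for all `i`, there exists a unique continuous
`R`-algebra homomorphism `Φ : MvPowerSeries σ R → A` with `Φ (X i) = v i` for all `i`. -/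
theorem mvPowerSeries_universal_property (R : Type*) [CommRing R] (σ : Type*) [Finite σ]
    (A : Type*) [CommRing A] [Algebra R A] (J : Ideal A) [IsAdicComplete J A]
    (v : σ → A) (hv : ∀ i, v i ∈ J) :
    letI : TopologicalSpace (MvPowerSeries σ R) :=
      (Pi.topologicalSpace (ι := σ →₀ ℕ) (Y := fun _ => R) (t₂ := fun _ => ⊥) :
        TopologicalSpace ((σ →₀ ℕ) → R))
    letI : TopologicalSpace A := J.adicTopology
    ∃! Φ : MvPowerSeries σ R →ₐ[R] A,
      Continuous Φ ∧ ∀ i : σ, Φ (MvPowerSeries.X i) = v i := by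
  classical
  letI tppi : TopologicalSpace (MvPowerSeries σ R) :=
    (Pi.topologicalSpace (ι := σ →₀ ℕ) (Y := fun _ => R) (t₂ := fun _ => ⊥) :
      TopologicalSpace ((σ →₀ ℕ) → R))
  letI tpA : TopologicalSpace A := J.adicTopology
  show ∃! Φ : MvPowerSeries σ R →ₐ[R] A,
      Continuous Φ ∧ ∀ i : σ, Φ (MvPowerSeries.X i) = v i
  set Φ : MvPowerSeries σ R →ₐ[R] A := substHom v J hv with hΦdef
  have hΦapp : ∀ h : MvPowerSeries σ R, Φ h = plim v J hv h := fun _ => rfl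
  have hΦX : ∀ i : σ, Φ (MvPowerSeries.X i) = v i := fun i => by
    rw [hΦapp]; exact plim_X (R := R) v J hv i
  -- continuity
  have hc : Continuous Φ := by
    rw [continuous_iff_continuousAt]
    intro f
    refine (J.hasBasis_nhds_adic (Φ f)).tendsto_right_iff.mpr ?_
    intro n _
    have hU : {g' : MvPowerSeries σ R |
        ∀ m ∈ S σ n, MvPowerSeries.coeff m g' = MvPowerSeries.coeff m f} ∈
          @nhds _ tppi f := by
      rw [show @nhds _ tppi f = _ from @nhds_pi (σ →₀ ℕ) (fun _ => R) (fun _ => ⊥) f]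
      refine Filter.mem_of_superset
        (Filter.pi_mem_pi (Finset.finite_toSet (S σ n))
          (fun m _ => ?_) (s := fun m => ({f m} : Set R))) ?_
      · rw [@nhds_discrete R ⊥ (discreteTopology_bot R)]
        exact rfl
      · intro g' hg' m hm
        exact hg' m hm
    filter_upwards [hU] with g' hg'
    have hgg : g R v g' n = g R v f n := g_congr v hg'
    refine ⟨Φ g' - Φ f, ?_, by dsimp only; ring⟩
    have h1 := plim_spec v J hv g' n
    have h2 := plim_spec v J hv f n
    rw [show Φ g' - Φ f = (plim v J hv g' - g R v g' n) - (plim v J hv f - g R v f n) from by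
      rw [hΦapp, hΦapp, hgg]; ring]
    exact sub_mem h1 h2
  refine ⟨Φ, ⟨hc, hΦX⟩, ?_⟩
  rintro Ψ ⟨hΨc, hΨX⟩
  -- uniqueness
  have hcomp : Ψ.comp (MvPolynomial.coeToMvPowerSeries.algHom (σ := σ) (R := R) R)
      = Φ.comp (MvPolynomial.coeToMvPowerSeries.algHom R) := by
    refine MvPolynomial.algHom_ext fun i => ?_
    simp only [AlgHom.comp_apply, MvPolynomial.coeToMvPowerSeries.algHom_apply,
      MvPolynomial.coe_X, MvPowerSeries.map_X]
    rw [hΨX i, hΦX i]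
  refine DFunLike.ext _ _ fun f => ?_
  refine eq_of_forall (A := A) J fun n => ?_
  have hW : ((fun y => Ψ f + y) '' ((J ^ n : Ideal A) : Set A)) ∈ @nhds A tpA (Ψ f) :=
    (J.hasBasis_nhds_adic (Ψ f)).mem_of_mem trivial
  have hpre : Ψ ⁻¹' ((fun y => Ψ f + y) '' ((J ^ n : Ideal A) : Set A)) ∈ @nhds _ tppi f :=
    hΨc.continuousAt.preimage_mem_nhds hW
  rw [show @nhds _ tppi f = _ from @nhds_pi (σ →₀ ℕ) (fun _ => R) (fun _ => ⊥) f] at hpre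
  obtain ⟨I, hIfin, V, hV, hVsub⟩ := Filter.mem_pi.mp hpre
  set E : Finset (σ →₀ ℕ) := hIfin.toFinset ∪ S σ n with hE
  set Q : MvPolynomial σ R :=
    ∑ m ∈ E, MvPolynomial.monomial m (MvPowerSeries.coeff m f) with hQ
  set P : MvPowerSeries σ R := MvPolynomial.coeToMvPowerSeries.algHom R Q with hP
  have hPco : ∀ m, MvPowerSeries.coeff m P
      = if m ∈ E then MvPowerSeries.coeff m f else 0 := by
    intro m
    rw [hP, MvPolynomial.coeToMvPowerSeries.algHom_apply, MvPowerSeries.coeff_map,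
      MvPolynomial.coeff_coe, hQ, MvPolynomial.coeff_sum]
    simp [MvPolynomial.coeff_monomial]
  have hPmem : P ∈ I.pi V := by
    intro m hm
    have h1 : f m ∈ V m := by
      have := hV m
      rw [@nhds_discrete R ⊥ (discreteTopology_bot R)] at this
      exact this
    have h2 : P m = f m := by
      have := hPco m
      rw [if_pos (Finset.mem_union_left _ (hIfin.mem_toFinset.mpr hm))] at this
      exact this
    rw [h2]
    exact h1
  have h1 : Ψ P - Ψ f ∈ J ^ n := by
    obtain ⟨y, hy, hy2⟩ := hVsub hPmem
    rw [← hy2, add_sub_cancel_left]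
    exact hy
  have h2 : Ψ P = Φ P := DFunLike.congr_fun hcomp Q
  have h3 : Φ P - g R v P n ∈ J ^ n := by rw [hΦapp]; exact plim_spec v J hv P n
  have h4 : g R v P n = g R v f n :=
    g_congr v fun m hm => by rw [hPco m, if_pos (Finset.mem_union_right _ hm)]
  have h5 : Φ f - g R v f n ∈ J ^ n := by rw [hΦapp]; exact plim_spec v J hv f n
  rw [show Ψ f - Φ f = -(Ψ P - Ψ f) + (Φ P - g R v P n) - (Φ f - g R v f n) from by
    rw [← h2, h4]; ring]
  exact sub_mem (add_mem (neg_mem h1) h3) h5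
end

section
/- Let R be a commutative ring and V an R-module. Let ε : ExteriorAlgebra R V → R be the canonical augmentation (ExteriorAlgebra.algebraMapInv) and let I = ker ε. Then the R-linear map V → I/I² obtained by composing ι : V → ExteriorAlgebra R V (whose image lies in I) with the quotient map I → I/I² is an isomorphism of R-modules. -/
/-! The retraction `ιInv : ExteriorAlgebra R V → V` is an `ε`-derivation, so it kills `I²` and
descends to a left inverse of `V → I/I²`. Conversely, since the exterior algebra is generated by
`ι V`, the expansion `ab - αβ = α(b - β) + β(a - α) + (a - α)(b - β)` (with `α = ε a`, `β = ε b`)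
shows by induction that `I ⊆ ι V + I²`. -/

section

variable (R V : Type*) [CommRing R] [AddCommGroup V] [Module R V]

/-- The augmentation ideal `I = ker ε` of the exterior algebra (where
`ε = ExteriorAlgebra.algebraMapInv` is the canonical augmentation), viewed as an
`R`-submodule of `ExteriorAlgebra R V`. -/
noncomputable def ExteriorAlgebra.augIdeal : Submodule R (ExteriorAlgebra R V) :=
  LinearMap.ker (ExteriorAlgebra.algebraMapInv (R := R) (M := V)).toLinearMap

theorem ExteriorAlgebra.ι_mem_augIdeal (v : V) :
    ExteriorAlgebra.ι R v ∈ ExteriorAlgebra.augIdeal R V := by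
  simp [ExteriorAlgebra.augIdeal, LinearMap.mem_ker, ExteriorAlgebra.algebraMapInv,
    ExteriorAlgebra.lift_ι_apply]

/-- The square `I²` of the augmentation ideal, i.e. the `R`-submodule generated by products
of two elements of `I`. -/
noncomputable def ExteriorAlgebra.augIdealSq : Submodule R (ExteriorAlgebra R V) :=
  Submodule.span R
    {z | ∃ x ∈ ExteriorAlgebra.augIdeal R V, ∃ y ∈ ExteriorAlgebra.augIdeal R V, z = x * y}

/-- The quotient `R`-module `I/I²`. -/
noncomputable def ExteriorAlgebra.augCotangent : Type _ :=
  ↥(ExteriorAlgebra.augIdeal R V) ⧸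
    ((ExteriorAlgebra.augIdealSq R V).comap (ExteriorAlgebra.augIdeal R V).subtype)

noncomputable instance : AddCommGroup (ExteriorAlgebra.augCotangent R V) := by
  delta ExteriorAlgebra.augCotangent; infer_instance

noncomputable instance : Module R (ExteriorAlgebra.augCotangent R V) := by
  delta ExteriorAlgebra.augCotangent; infer_instance

/-- The `R`-linear map `V → I/I²` obtained by composing `ι : V → ExteriorAlgebra R V`
(whose image lies in `I`) with the quotient map `I → I/I²`. -/
noncomputable def ExteriorAlgebra.ιCotangent : V →ₗ[R] ExteriorAlgebra.augCotangent R V :=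
  (((ExteriorAlgebra.augIdealSq R V).comap
      (ExteriorAlgebra.augIdeal R V).subtype).mkQ).comp
    ((ExteriorAlgebra.ι R).codRestrict (ExteriorAlgebra.augIdeal R V)
      (ExteriorAlgebra.ι_mem_augIdeal R V))

end

namespace ExteriorAlgebra

variable {R V : Type*} [CommRing R] [AddCommGroup V] [Module R V]

theorem fst_toTrivSqZeroExt [Module Rᵐᵒᵖ V] [IsCentralScalar R V] (x : ExteriorAlgebra R V) :
    (toTrivSqZeroExt x).fst = algebraMapInv x := by
  change (TrivSqZeroExt.fstHom R R V).comp toTrivSqZeroExt x = algebraMapInv x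
  congr 1
  ext m
  simp [algebraMapInv]

theorem ιInv_mul (x y : ExteriorAlgebra R V) :
    ιInv (x * y) = algebraMapInv x • ιInv y + algebraMapInv y • ιInv x := by
  let : Module Rᵐᵒᵖ V := Module.compHom _ ((RingHom.id R).fromOpposite mul_comm)
  have : IsCentralScalar R V := ⟨fun _ _ => rfl⟩
  change (toTrivSqZeroExt (x * y)).snd = _
  rw [map_mul, TrivSqZeroExt.snd_mul, fst_toTrivSqZeroExt, fst_toTrivSqZeroExt]
  -- with this `Rᵐᵒᵖ`-action, `op r • v` is `r • v` definitionally
  rfl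

theorem algebraMapInv_ι (v : V) : algebraMapInv (ι R v) = 0 := by
  simp [algebraMapInv]

theorem mem_augIdeal_iff {x : ExteriorAlgebra R V} :
    x ∈ augIdeal R V ↔ algebraMapInv x = 0 :=
  Iff.rfl

theorem sub_algebraMap_algebraMapInv_mem_augIdeal (x : ExteriorAlgebra R V) :
    x - algebraMap R _ (algebraMapInv x) ∈ augIdeal R V := by
  simp [mem_augIdeal_iff, algebraMap_leftInverse V _]

theorem mul_mem_augIdealSq {x y : ExteriorAlgebra R V} (hx : x ∈ augIdeal R V)
    (hy : y ∈ augIdeal R V) : x * y ∈ augIdealSq R V :=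
  Submodule.subset_span ⟨x, hx, y, hy, rfl⟩

theorem augIdealSq_le_ker_ιInv : augIdealSq R V ≤ LinearMap.ker (ιInv (R := R) (M := V)) := by
  rw [augIdealSq, Submodule.span_le]
  rintro _ ⟨x, hx, y, hy, rfl⟩
  rw [SetLike.mem_coe, LinearMap.mem_ker, ιInv_mul, mem_augIdeal_iff.mp hx,
    mem_augIdeal_iff.mp hy, zero_smul, zero_smul, add_zero]

theorem sub_algebraMap_algebraMapInv_mem_range_ι_sup_augIdealSq (x : ExteriorAlgebra R V) :
    x - algebraMap R _ (algebraMapInv x) ∈ LinearMap.range (ι R) ⊔ augIdealSq R V := by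
  set T := LinearMap.range (ι R) ⊔ augIdealSq R V
  induction x using ExteriorAlgebra.induction with
  | algebraMap r => simp [algebraMap_leftInverse V r]
  | ι v =>
    rw [algebraMapInv_ι, map_zero, sub_zero]
    exact Submodule.mem_sup_left ⟨v, rfl⟩
  | add a b ha hb =>
    convert T.add_mem ha hb using 1
    rw [map_add, map_add]
    abel
  | mul a b ha hb =>
    set α := algebraMapInv a
    set β := algebraMapInv b
    have expand : a * b - algebraMap R _ (algebraMapInv (a * b)) =
        α • (b - algebraMap R _ β) + β • (a - algebraMap R _ α) +
          (a - algebraMap R _ α) * (b - algebraMap R _ β) := by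
      simp only [map_mul, Algebra.smul_def, mul_sub, sub_mul, Algebra.commutes β a]
      rw [Algebra.commutes β]
      abel
    rw [expand]
    exact T.add_mem (T.add_mem (T.smul_mem α hb) (T.smul_mem β ha)) <|
      Submodule.mem_sup_right <| mul_mem_augIdealSq
        (sub_algebraMap_algebraMapInv_mem_augIdeal a) (sub_algebraMap_algebraMapInv_mem_augIdeal b)

theorem augIdeal_le_range_ι_sup_augIdealSq :
    augIdeal R V ≤ LinearMap.range (ι R) ⊔ augIdealSq R V := by
  intro x hx
  simpa [mem_augIdeal_iff.mp hx] using sub_algebraMap_algebraMapInv_mem_range_ι_sup_augIdealSq x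

variable (R V) in
theorem ιCotangent_injective : Function.Injective (ιCotangent R V) := by
  have hker : (augIdealSq R V).comap (augIdeal R V).subtype ≤
      LinearMap.ker (ιInv.comp (augIdeal R V).subtype) := fun _ hx => augIdealSq_le_ker_ιInv hx
  exact Function.LeftInverse.injective (g := Submodule.liftQ _ _ hker) ι_leftInverse

variable (R V) in
theorem ιCotangent_surjective : Function.Surjective (ιCotangent R V) := by
  intro z
  obtain ⟨⟨x, hx⟩, rfl⟩ := Submodule.Quotient.mk_surjective _ z
  obtain ⟨_, ⟨v, rfl⟩, q, hq, rfl⟩ := Submodule.mem_sup.mp (augIdeal_le_range_ι_sup_augIdealSq hx)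
  refine ⟨v, (Submodule.Quotient.eq _).mpr ?_⟩
  change ι R v - (ι R v + q) ∈ augIdealSq R V
  simpa using (augIdealSq R V).neg_mem hq

end ExteriorAlgebra

/-- Let `R` be a commutative ring, `V` an `R`-module,
`ε : ExteriorAlgebra R V → R` the canonical augmentation, and `I = ker ε`. Then the `R`-linear
map `V → I/I²` obtained by composing `ι : V → ExteriorAlgebra R V` with the quotient map
`I → I/I²` is an isomorphism of `R`-modules (being `R`-linear, this means it is bijective). -/
theorem exteriorAlgebra_cotangent_iso (R V : Type*) [CommRing R] [AddCommGroup V]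
    [Module R V] :
    Function.Bijective (ExteriorAlgebra.ιCotangent R V) :=
  ⟨ExteriorAlgebra.ιCotangent_injective R V, ExteriorAlgebra.ιCotangent_surjective R V⟩
end
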